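/- Let (X, ‖·‖) be a Banach space, L: X → X a bounded linear operator with ‖L(x)‖ ≤ λ‖x‖ for all x ∈ X and some λ ∈ [0,1), and B: X × X → X a bilinear map with ‖B(x₁,x₂)‖ ≤ η‖x₁‖‖x₂‖ for some η > 0. Then for every y ∈ X with 4η‖y‖ < (1-λ)², the equation x = y + L(x) + B(x,x) has a solution x ∈ X satisfying ‖x‖ ≤ 2‖y‖/(1-λ), and this solution is unique among all solutions with ‖x‖ < (1-λ)/(2η). -/

import Mathlib

/-!
The solution is the fixed point of `F x = y + L x + B x x`. Since
`F a - F b = L (a - b) + B (a - b) a + B b (a - b)`, the map `F` is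
`(λ + η (‖a‖ + ‖b‖))`-Lipschitz between `a` and `b`. With `r = 2‖y‖/(1-λ)`, the hypothesis
`4η‖y‖ < (1-λ)²` says exactly `2ηr < 1-λ`, so `F` maps the closed ball of radius `r` into itself
and contracts it with constant `λ + 2ηr < 1`; Banach's fixed point theorem gives the solution.
Two solutions of norm `< (1-λ)/(2η)` are at distance at most `λ + η (‖a‖ + ‖b‖) < 1` times
their distance, hence equal.
-/

open Metric Set Function

def picardMap {R X : Type*} [CommSemiring R] [AddCommGroup X] [Module R X] (y : X)
    (L : X →ₗ[R] X) (B : X →ₗ[R] X →ₗ[R] X) (x : X) : X :=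
  y + L x + B x x

section Algebra

variable {R X : Type*} [CommSemiring R] [AddCommGroup X] [Module R X] (y : X) (L : X →ₗ[R] X)
  (B : X →ₗ[R] X →ₗ[R] X)

@[simp]
lemma picardMap_zero : picardMap y L B 0 = y := by
  simp [picardMap]

lemma picardMap_sub_picardMap (a b : X) :
    picardMap y L B a - picardMap y L B b = L (a - b) + B (a - b) a + B b (a - b) := by
  simp only [picardMap, map_sub, LinearMap.sub_apply]
  abel

end Algebra

section Estimates

variable {R X : Type*} [CommSemiring R] [SeminormedAddCommGroup X] [Module R X] {y : X}
  {L : X →ₗ[R] X} {B : X →ₗ[R] X →ₗ[R] X} {lam η : ℝ}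

lemma norm_picardMap_sub_le (hL : ∀ x, ‖L x‖ ≤ lam * ‖x‖)
    (hB : ∀ x₁ x₂, ‖B x₁ x₂‖ ≤ η * ‖x₁‖ * ‖x₂‖) (a b : X) :
    ‖picardMap y L B a - picardMap y L B b‖ ≤ (lam + η * (‖a‖ + ‖b‖)) * ‖a - b‖ :=
  calc ‖picardMap y L B a - picardMap y L B b‖
      = ‖L (a - b) + B (a - b) a + B b (a - b)‖ := by rw [picardMap_sub_picardMap]
    _ ≤ ‖L (a - b)‖ + ‖B (a - b) a‖ + ‖B b (a - b)‖ := norm_add₃_le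
    _ ≤ lam * ‖a - b‖ + η * ‖a - b‖ * ‖a‖ + η * ‖b‖ * ‖a - b‖ := by
      gcongr <;> apply_assumption
    _ = (lam + η * (‖a‖ + ‖b‖)) * ‖a - b‖ := by ring

lemma norm_picardMap_le (hL : ∀ x, ‖L x‖ ≤ lam * ‖x‖)
    (hB : ∀ x₁ x₂, ‖B x₁ x₂‖ ≤ η * ‖x₁‖ * ‖x₂‖) (x : X) :
    ‖picardMap y L B x‖ ≤ ‖y‖ + (lam + η * ‖x‖) * ‖x‖ := by
  have h := norm_picardMap_sub_le (y := y) hL hB x 0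
  simp only [picardMap_zero, norm_zero, add_zero, sub_zero] at h
  linarith [norm_le_insert' (picardMap y L B x) y]

lemma mapsTo_picardMap_closedBall (hlam : 0 ≤ lam) (hη : 0 ≤ η)
    (hL : ∀ x, ‖L x‖ ≤ lam * ‖x‖) (hB : ∀ x₁ x₂, ‖B x₁ x₂‖ ≤ η * ‖x₁‖ * ‖x₂‖) {r : ℝ}
    (hr : ‖y‖ + (lam + η * r) * r ≤ r) :
    MapsTo (picardMap y L B) (closedBall 0 r) (closedBall 0 r) := by
  intro x hx
  rw [mem_closedBall_zero_iff] at hx ⊢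
  calc ‖picardMap y L B x‖ ≤ ‖y‖ + (lam + η * ‖x‖) * ‖x‖ := norm_picardMap_le hL hB x
    _ ≤ ‖y‖ + (lam + η * r) * r := by
      have : 0 ≤ r := (norm_nonneg x).trans hx
      gcongr
    _ ≤ r := hr

lemma dist_picardMap_le_of_mem_closedBall (hη : 0 ≤ η) (hL : ∀ x, ‖L x‖ ≤ lam * ‖x‖)
    (hB : ∀ x₁ x₂, ‖B x₁ x₂‖ ≤ η * ‖x₁‖ * ‖x₂‖) {r : ℝ} {a b : X}
    (ha : a ∈ closedBall 0 r) (hb : b ∈ closedBall 0 r) :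
    dist (picardMap y L B a) (picardMap y L B b) ≤ (lam + 2 * η * r) * dist a b := by
  rw [mem_closedBall_zero_iff] at ha hb
  rw [dist_eq_norm, dist_eq_norm]
  calc ‖picardMap y L B a - picardMap y L B b‖ ≤ (lam + η * (‖a‖ + ‖b‖)) * ‖a - b‖ :=
        norm_picardMap_sub_le hL hB a b
    _ ≤ (lam + η * (r + r)) * ‖a - b‖ := by gcongr
    _ = (lam + 2 * η * r) * ‖a - b‖ := by ring

end Estimates

section FixedPoints

variable {R X : Type*} [CommSemiring R] [NormedAddCommGroup X] [Module R X] {y : X} {L : X →ₗ[R] X}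
  {B : X →ₗ[R] X →ₗ[R] X} {lam η : ℝ}

lemma exists_isFixedPt_picardMap_mem_closedBall [CompleteSpace X] (hlam : 0 ≤ lam) (hη : 0 ≤ η)
    (hL : ∀ x, ‖L x‖ ≤ lam * ‖x‖) (hB : ∀ x₁ x₂, ‖B x₁ x₂‖ ≤ η * ‖x₁‖ * ‖x₂‖) {r : ℝ}
    (hr0 : 0 ≤ r) (hr : ‖y‖ + (lam + η * r) * r ≤ r) (hcontr : lam + 2 * η * r < 1) :
    ∃ x ∈ closedBall 0 r, IsFixedPt (picardMap y L B) x := by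
  have hmaps := mapsTo_picardMap_closedBall hlam hη hL hB hr
  let K : NNReal := ⟨lam + 2 * η * r, by positivity⟩
  have hK : ContractingWith K (hmaps.restrict _ _ _) :=
    ⟨hcontr, (LipschitzOnWith.of_dist_le_mul fun a ha b hb ↦
      dist_picardMap_le_of_mem_closedBall hη hL hB ha hb).mapsToRestrict hmaps⟩
  obtain ⟨x, hx, hfix, -⟩ := hK.exists_fixedPoint' isClosed_closedBall.isComplete hmaps
    (mem_closedBall_self hr0) (edist_ne_top _ _)
  exact ⟨x, hx, hfix⟩

lemma eq_of_isFixedPt_picardMap (hL : ∀ x, ‖L x‖ ≤ lam * ‖x‖)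
    (hB : ∀ x₁ x₂, ‖B x₁ x₂‖ ≤ η * ‖x₁‖ * ‖x₂‖) {a b : X} (ha : IsFixedPt (picardMap y L B) a)
    (hb : IsFixedPt (picardMap y L B) b) (hab : lam + η * (‖a‖ + ‖b‖) < 1) : a = b := by
  have h := norm_picardMap_sub_le (y := y) hL hB a b
  rw [ha.eq, hb.eq] at h
  have : ‖a - b‖ ≤ 0 := by nlinarith [norm_nonneg (a - b)]
  exact sub_eq_zero.1 (norm_le_zero_iff.1 this)

end FixedPoints

/-- **Banach fixed point with a linear perturbation.**
If `L` is a bounded linear operator with `‖L x‖ ≤ λ ‖x‖`, `λ ∈ [0,1)`, and `B` is a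
bilinear map with `‖B x₁ x₂‖ ≤ η ‖x₁‖ ‖x₂‖`, then for every `y` with `4η‖y‖ < (1-λ)²`
the equation `x = y + L x + B x x` has a solution with `‖x‖ ≤ 2‖y‖/(1-λ)`, unique among
all solutions with `‖x‖ < (1-λ)/(2η)`. -/
theorem stmt_7
    {X : Type*} [NormedAddCommGroup X] [NormedSpace ℝ X] [CompleteSpace X]
    (L : X →ₗ[ℝ] X) (lam : ℝ) (hlam0 : 0 ≤ lam) (hlam1 : lam < 1)
    (hL : ∀ x : X, ‖L x‖ ≤ lam * ‖x‖)
    (B : X →ₗ[ℝ] X →ₗ[ℝ] X) (η : ℝ) (hη : 0 < η)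
    (hB : ∀ x₁ x₂ : X, ‖B x₁ x₂‖ ≤ η * ‖x₁‖ * ‖x₂‖)
    (y : X) (hy : 4 * η * ‖y‖ < (1 - lam) ^ 2) :
    ∃ x : X, x = y + L x + B x x ∧ ‖x‖ ≤ 2 * ‖y‖ / (1 - lam) ∧
      ∀ x' : X, x' = y + L x' + B x' x' → ‖x'‖ < (1 - lam) / (2 * η) → x' = x := by
  have hgap : 0 < 1 - lam := by linarith
  set r := 2 * ‖y‖ / (1 - lam) with hr_def
  have hr : (1 - lam) * r = 2 * ‖y‖ := by rw [hr_def]; field_simp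
  have hr0 : 0 ≤ r := by positivity
  have hηr : 2 * η * r < 1 - lam := by
    refine lt_of_mul_lt_mul_right ?_ hgap.le
    nlinarith
  -- equivalently `η r² ≤ ‖y‖ = (1 - λ) r / 2`
  have hball : ‖y‖ + (lam + η * r) * r ≤ r := by nlinarith
  obtain ⟨x, hxr, hx⟩ :=
    exists_isFixedPt_picardMap_mem_closedBall hlam0 hη.le hL hB hr0 hball (by linarith)
  rw [mem_closedBall_zero_iff] at hxr
  refine ⟨x, hx.symm, hxr, fun x' hx' hx'r ↦ eq_of_isFixedPt_picardMap hL hB hx'.symm hx ?_⟩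
  have hηx' : η * ‖x'‖ < (1 - lam) / 2 := by
    rw [lt_div_iff₀ (by positivity)] at hx'r
    linarith
  nlinarith
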